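/- arXiv:0804.1335 — 5 statements merged into one kernel-verified Lean document; each statement's English description precedes it below -/
import Mathlib

section
/- There exist three points c₀, c₁, c₂ in the hyperbolic plane ℍ such that the composition g = f_{c₂} ∘ f_{c₁} ∘ f_{c₀} of the point reflections at c₂, c₁, c₀ satisfies g ≠ id and g ∘ g ∘ g = id (i.e., g is a rotation of order 3 about some point of ℍ). -/
/-!
A point reflection of `ℍ` is the Möbius map of a trace-zero matrix of `SL(2, ℝ)`, and every
`c ∈ ℍ` is the fixed point of one such matrix; by Cayley–Hamilton it squares to `-1`, which acts
trivially. For the centres `i`, `2i`, `-2 + 3i` the product of the three matrices has trace `1`,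
so Cayley–Hamilton again gives `g² = g - 1` and hence `g³ = -1`, while the fixed-point equation
shows that `g` moves `i`.
-/

open UpperHalfPlane

/-- A point reflection of the hyperbolic plane at `c`: an involutive isometry whose
unique fixed point is `c`. -/
def IsPointReflection (f : ℍ ≃ᵢ ℍ) (c : ℍ) : Prop :=
  (∀ x, f (f x) = x) ∧ (∀ x, f x = x ↔ x = c)

open Matrix MatrixGroups

namespace Matrix.SpecialLinearGroup

variable {R : Type*} [CommRing R]

theorem coe_mul_self_eq_trace_smul_sub_one (g : SL(2, R)) :
    (g * g : Matrix (Fin 2) (Fin 2) R) = trace (g : Matrix (Fin 2) (Fin 2) R) • g - 1 := by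
  have hdet := g.det_coe
  rw [det_fin_two] at hdet
  ext i j
  fin_cases i <;> fin_cases j <;> simp [Matrix.mul_apply, Fin.sum_univ_two, trace_fin_two] <;>
    first | linear_combination -hdet | ring

theorem mul_self_eq_neg_one_of_trace_eq_zero {g : SL(2, R)}
    (h : trace (g : Matrix (Fin 2) (Fin 2) R) = 0) : g * g = -1 := by
  apply Subtype.ext
  rw [coe_mul, coe_mul_self_eq_trace_smul_sub_one, h, zero_smul, zero_sub, coe_neg, coe_one]

theorem pow_three_eq_neg_one_of_trace_eq_one {g : SL(2, R)}
    (h : trace (g : Matrix (Fin 2) (Fin 2) R) = 1) : g ^ 3 = -1 := by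
  have hsq : (g * g : Matrix (Fin 2) (Fin 2) R) = g - 1 := by
    rw [coe_mul_self_eq_trace_smul_sub_one, h, one_smul]
  apply Subtype.ext
  rw [coe_pow, pow_three', hsq, sub_mul, hsq, one_mul, sub_sub_cancel_left, coe_neg, coe_one]

end Matrix.SpecialLinearGroup

namespace UpperHalfPlane

theorem specialLinearGroup_neg_smul (g : SL(2, ℝ)) (z : ℍ) : -g • z = g • z := by
  ext
  simp only [coe_specialLinearGroup_apply, Algebra.algebraMap_self, RingHom.id_apply,
    SpecialLinearGroup.coe_neg, Matrix.neg_apply, Complex.ofReal_neg, neg_mul, ← neg_add,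
    neg_div_neg_eq]

theorem neg_one_smul_eq_self (z : ℍ) : (-1 : SL(2, ℝ)) • z = z := by
  rw [specialLinearGroup_neg_smul, one_smul]

theorem specialLinearGroup_smul_eq_self_iff (g : SL(2, ℝ)) (z : ℍ) :
    g • z = z ↔ (g 1 0 : ℂ) * z ^ 2 + (g 1 1 - g 0 0) * z - g 0 1 = 0 := by
  have hd : (g 1 0 : ℂ) * z + g 1 1 ≠ 0 := denom_ne_zero g z
  rw [UpperHalfPlane.ext_iff, coe_specialLinearGroup_apply]
  simp only [Algebra.algebraMap_self, RingHom.id_apply]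
  rw [div_eq_iff hd]
  constructor <;> intro h <;> linear_combination -h

/-- The half-turn about `c = x + iy` is `z ↦ (x z - |c|²) / (z - x)`, normalised by `1 / y` to
have determinant one; its fixed-point equation is `(z - c) (z - conj c) = 0`. -/
noncomputable def halfTurn (c : ℍ) : SL(2, ℝ) :=
  ⟨!![c.re / c.im, -(c.re ^ 2 + c.im ^ 2) / c.im; 1 / c.im, -c.re / c.im], by
    rw [det_fin_two_of]
    field_simp [c.im_ne_zero]
    ring⟩

theorem trace_halfTurn (c : ℍ) : trace (halfTurn c : Matrix (Fin 2) (Fin 2) ℝ) = 0 := by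
  simp [halfTurn, trace_fin_two, neg_div]

theorem halfTurn_smul_halfTurn_smul (c z : ℍ) : halfTurn c • halfTurn c • z = z := by
  rw [smul_smul, SpecialLinearGroup.mul_self_eq_neg_one_of_trace_eq_zero (trace_halfTurn c),
    neg_one_smul_eq_self]

theorem halfTurn_smul_eq_self_iff (c z : ℍ) : halfTurn c • z = z ↔ z = c := by
  have hy : (c.im : ℂ) ≠ 0 := by exact_mod_cast c.im_ne_zero
  have hc : (c : ℂ) = c.re + c.im * Complex.I := (Complex.re_add_im c).symm
  have hconj : (z : ℂ) ≠ c.re - c.im * Complex.I := fun h => by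
    have := congrArg Complex.im h
    simp only [coe_im, Complex.sub_im, Complex.ofReal_im, Complex.mul_im, Complex.ofReal_re,
      Complex.I_im, mul_one, Complex.I_re, mul_zero, add_zero, zero_sub] at this
    linarith [z.im_pos, c.im_pos]
  rw [specialLinearGroup_smul_eq_self_iff, UpperHalfPlane.ext_iff, hc]
  simp only [halfTurn, of_apply, cons_val', cons_val_zero, cons_val_one, empty_val',
    cons_val_fin_one, Complex.ofReal_div, Complex.ofReal_neg, Complex.ofReal_one,
    Complex.ofReal_add, Complex.ofReal_pow]
  have key : (1 / (c.im : ℂ)) * z ^ 2 + (-c.re / c.im - c.re / c.im) * z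
      - (-(c.re ^ 2 + c.im ^ 2) / c.im) =
      (z - (c.re + c.im * Complex.I)) * (z - (c.re - c.im * Complex.I)) / c.im := by
    field_simp
    linear_combination (c.im : ℂ) ^ 2 * Complex.I_sq
  rw [key, div_eq_zero_iff, mul_eq_zero, sub_eq_zero, sub_eq_zero]
  tauto

theorem isPointReflection_halfTurn (c : ℍ) :
    IsPointReflection (IsometryEquiv.constSMul (halfTurn c)) c :=
  ⟨halfTurn_smul_halfTurn_smul c, halfTurn_smul_eq_self_iff c⟩

end UpperHalfPlane

/-- There exist three points of the hyperbolic plane such that the composition of the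
point reflections at them is a nontrivial isometry of order 3 (a rotation by `2π/3`). -/
theorem exists_three_point_reflections_composition_order_three :
    ∃ (c₀ c₁ c₂ : ℍ) (f₀ f₁ f₂ : ℍ ≃ᵢ ℍ),
      IsPointReflection f₀ c₀ ∧ IsPointReflection f₁ c₁ ∧ IsPointReflection f₂ c₂ ∧
      (⇑f₂ ∘ ⇑f₁ ∘ ⇑f₀) ≠ id ∧
      (⇑f₂ ∘ ⇑f₁ ∘ ⇑f₀) ∘ (⇑f₂ ∘ ⇑f₁ ∘ ⇑f₀) ∘ (⇑f₂ ∘ ⇑f₁ ∘ ⇑f₀) = id := by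
  let c₀ : ℍ := I
  let c₁ : ℍ := ⟨2 * Complex.I, by simp⟩
  let c₂ : ℍ := ⟨-2 + 3 * Complex.I, by simp⟩
  let g := halfTurn c₂ * halfTurn c₁ * halfTurn c₀
  have hg : (g : Matrix (Fin 2) (Fin 2) ℝ) = !![4 / 3, 13 / 6; -2 / 3, -1 / 3] := by
    simp only [g, Matrix.SpecialLinearGroup.coe_mul]
    ext i j
    fin_cases i <;> fin_cases j <;>
      norm_num [c₀, c₁, c₂, halfTurn, Matrix.mul_apply, Fin.sum_univ_two]
  have hcomp : ⇑(IsometryEquiv.constSMul (halfTurn c₂)) ∘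
      ⇑(IsometryEquiv.constSMul (halfTurn c₁)) ∘ ⇑(IsometryEquiv.constSMul (halfTurn c₀)) =
      (g • · : ℍ → ℍ) := by
    funext z
    simp [g, mul_smul]
  refine ⟨c₀, c₁, c₂, _, _, _, isPointReflection_halfTurn c₀, isPointReflection_halfTurn c₁,
    isPointReflection_halfTurn c₂, ?_, ?_⟩ <;> rw [hcomp]
  · intro h
    have hI : g • I = I := congrFun h I
    rw [specialLinearGroup_smul_eq_self_iff, hg] at hI
    have hIm := congrArg Complex.im hI
    norm_num at hIm
  · have hg3 : g ^ 3 = -1 := SpecialLinearGroup.pow_three_eq_neg_one_of_trace_eq_one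
      (by rw [hg, trace_fin_two_of]; norm_num)
    funext z
    simp only [Function.comp_apply, smul_smul, ← pow_three, hg3, neg_one_smul_eq_self, id]
end

section
/- There exists a three-element set T ⊆ ℍ such that for every partition ℍ = A₁ ∪ A₂ of the hyperbolic plane into two (not necessarily Borel) pieces, one of the pieces A_i contains a subset S that is unbounded in the hyperbolic metric and satisfies f_c(S) = S for some c ∈ T, where f_c is the point reflection at c. -/
/-!
Choose three trace-zero matrices `M₁, M₂, M₃ ∈ SL(2, ℝ)` with `(M₁ M₂ M₃)³ = -1`; each acts on `ℍ`
as a point reflection. Say that an isometry `f` swaps `A` at infinity if, outside a bounded set,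
`f x ∈ A ↔ x ∉ A`. Isometries preserve the cobounded filter, so a composite of an odd number of
such swaps is again one; hence if all three reflections swapped `A₁` at infinity, so would
`(f₁ f₂ f₃)³ = id`, which is absurd as `ℍ` is unbounded. So some reflection `f` keeps membership
in `A₁` on an unbounded set of points `x`; then `x` and `f x` lie in the same piece `A` on an
unbounded set, and `A ∩ f⁻¹' A` is an unbounded `f`-invariant subset of that piece.
-/

open UpperHalfPlane Set Filter Bornology Function Matrix MatrixGroups

def EventuallySwaps {X : Type*} (L : Filter X) (A : Set X) (f : X → X) : Prop :=
  ∀ᶠ x in L, f x ∈ A ↔ x ∉ A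

namespace EventuallySwaps

variable {X : Type*} {L : Filter X} {A : Set X} {f g h : X → X}

theorem comp_comp (hf : EventuallySwaps L A f) (hg : EventuallySwaps L A g)
    (hh : EventuallySwaps L A h) (hgL : Tendsto g L L) (hhL : Tendsto h L L) :
    EventuallySwaps L A (f ∘ g ∘ h) := by
  filter_upwards [hh, hhL.eventually hg, hhL.eventually (hgL.eventually hf)] with x hx hgx hfgx
  simp only [Function.comp_apply]
  tauto

theorem not_id [L.NeBot] : ¬EventuallySwaps L A id := fun h ↦ by
  simpa using h.exists

theorem not_and_and_of_iterate_three_eq_id [L.NeBot] (hfL : Tendsto f L L)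
    (hgL : Tendsto g L L) (hhL : Tendsto h L L) (hfgh : (f ∘ g ∘ h)^[3] = id) :
    ¬(EventuallySwaps L A f ∧ EventuallySwaps L A g ∧ EventuallySwaps L A h) := by
  rintro ⟨hf, hg, hh⟩
  have hk := hf.comp_comp hg hh hgL hhL
  have hkL : Tendsto (f ∘ g ∘ h) L L := hfL.comp (hgL.comp hhL)
  have hk₃ := hk.comp_comp hk hk hkL hkL
  have hfgh' : (f ∘ g ∘ h) ∘ (f ∘ g ∘ h) ∘ (f ∘ g ∘ h) = id := hfgh
  exact not_id (hfgh' ▸ hk₃)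

end EventuallySwaps

theorem Bornology.not_isBounded_iff_frequently {X : Type*} [Bornology X] {s : Set X} :
    ¬IsBounded s ↔ ∃ᶠ x in cobounded X, x ∈ s := by
  rw [isBounded_def]
  rfl

theorem Function.Involutive.image_inter_preimage_self {X : Type*} {f : X → X}
    (hf : Involutive f) (A : Set X) : f '' (A ∩ f ⁻¹' A) = A ∩ f ⁻¹' A := by
  rw [hf.image_eq_preimage_symm, preimage_inter, ← preimage_comp, hf.comp_self, preimage_id,
    inter_comm]

theorem exists_unbounded_invariant_subset {X : Type*} [Bornology X] {f : X → X}
    (hf : Involutive f) {A : Set X} (hA : ∃ᶠ x in cobounded X, x ∈ A ∧ f x ∈ A) :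
    ∃ S ⊆ A, ¬IsBounded S ∧ f '' S = S :=
  ⟨A ∩ f ⁻¹' A, inter_subset_left, not_isBounded_iff_frequently.2 hA,
    hf.image_inter_preimage_self A⟩

theorem exists_unbounded_invariant_subset_of_not_eventuallySwaps {X : Type*} [Bornology X]
    {f : X → X} (hf : Involutive f) {A₁ A₂ : Set X} (hU : A₁ ∪ A₂ = univ)
    (h : ¬EventuallySwaps (cobounded X) A₁ f) :
    ∃ A ∈ ({A₁, A₂} : Set (Set X)), ∃ S ⊆ A, ¬IsBounded S ∧ f '' S = S := by
  have hA₂ (x : X) (hx : x ∉ A₁) : x ∈ A₂ := by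
    simpa [hx] using hU.ge (mem_univ x)
  have hsplit : (∃ᶠ x in cobounded X, x ∈ A₁ ∧ f x ∈ A₁) ∨
      ∃ᶠ x in cobounded X, x ∉ A₁ ∧ f x ∉ A₁ := by
    rw [← frequently_or_distrib]
    exact (not_eventually.1 h).mono fun x hx ↦ by tauto
  rcases hsplit with h₁ | h₂
  · exact ⟨A₁, by simp, exists_unbounded_invariant_subset hf h₁⟩
  · exact ⟨A₂, by simp, exists_unbounded_invariant_subset hf
      (h₂.mono fun x hx ↦ ⟨hA₂ x hx.1, hA₂ _ hx.2⟩)⟩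

instance UpperHalfPlane.cobounded_neBot : (cobounded ℍ).NeBot := by
  rw [Metric.cobounded_eq_cocompact]
  infer_instance

theorem Matrix.SpecialLinearGroup.mul_self_eq_neg_one_of_trace_eq_zero_s3 {R : Type*} [CommRing R]
    (M : SL(2, R)) (htr : M 1 1 = -M 0 0) : M * M = -1 := by
  have hdet := M.det_coe
  rw [det_fin_two, htr] at hdet
  ext i j
  fin_cases i <;> fin_cases j <;> simp [Matrix.mul_apply, Fin.sum_univ_two, htr] <;>
    first | linear_combination -hdet | ring

theorem UpperHalfPlane.smul_eq_self_iff_of_trace_eq_zero {M : SL(2, ℝ)} (htr : M 1 1 = -M 0 0)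
    (hM : 0 < M 1 0) {c : ℍ} (hc : (M 1 0 : ℂ) * c = M 0 0 + Complex.I) (z : ℍ) :
    M • z = z ↔ z = c := by
  have hdet : (M 0 0 : ℂ) * -M 0 0 - M 0 1 * M 1 0 = 1 := by
    have := M.det_coe
    rw [det_fin_two, htr] at this
    exact_mod_cast this
  have hM' : (M 1 0 : ℂ) ≠ 0 := by exact_mod_cast hM.ne'
  have him (s : ℝ) : ((M 1 0 : ℂ) * z - (M 0 0 + s * Complex.I)).im = M 1 0 * z.im - s := by
    simp
  have hden : (M 1 0 : ℂ) * z - M 0 0 ≠ 0 := fun h ↦ by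
    have := him 0
    simp only [Complex.ofReal_zero, zero_mul, add_zero, h, Complex.zero_im] at this
    nlinarith [z.im_pos]
  have hfix : M • z = z ↔ (M 0 0 : ℂ) * z + M 0 1 = z * ((M 1 0 : ℂ) * z - M 0 0) := by
    rw [UpperHalfPlane.ext_iff, coe_specialLinearGroup_apply,
      div_eq_iff (by simpa [htr, sub_eq_add_neg] using hden)]
    simp [htr, sub_eq_add_neg]
  have hc' : z = c ↔ (M 1 0 : ℂ) * z = M 0 0 + Complex.I := by
    rw [UpperHalfPlane.ext_iff, ← hc, mul_right_inj' hM']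
  rw [hfix, hc']
  constructor
  · intro h
    -- with `α = M 0 0`, `γ = M 1 0` the fixed-point equation reads `(γ z - α)² = -1`,
    -- and `γ z - α = -i` is impossible for `z ∈ ℍ` since `γ > 0`
    have hfac : ((M 1 0 : ℂ) * z - (M 0 0 + Complex.I)) *
        ((M 1 0 : ℂ) * z - (M 0 0 + (-1 : ℝ) * Complex.I)) = 0 := by
      push_cast
      linear_combination (-(M 1 0 : ℂ)) * h - hdet - Complex.I_sq
    rcases mul_eq_zero.1 hfac with h₁ | h₂
    · exact sub_eq_zero.1 h₁
    · have := him (-1)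
      rw [h₂, Complex.zero_im] at this
      nlinarith [z.im_pos]
  · intro h
    refine mul_left_cancel₀ hM' ?_
    linear_combination (M 0 0 - Complex.I - M 1 0 * z) * h - hdet - Complex.I_sq

theorem UpperHalfPlane.neg_one_smul (z : ℍ) : (-1 : SL(2, ℝ)) • z = z := by
  ext
  simp [coe_specialLinearGroup_apply]

theorem isPointReflection_constSMul_of_trace_eq_zero {M : SL(2, ℝ)} (htr : M 1 1 = -M 0 0)
    (hM : 0 < M 1 0) {c : ℍ} (hc : (M 1 0 : ℂ) * c = M 0 0 + Complex.I) :
    IsPointReflection (IsometryEquiv.constSMul M) c :=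
  ⟨fun z ↦ by
    simp only [IsometryEquiv.constSMul_apply, smul_smul,
      M.mul_self_eq_neg_one_of_trace_eq_zero_s3 htr, UpperHalfPlane.neg_one_smul],
    smul_eq_self_iff_of_trace_eq_zero htr hM hc⟩

-- `!![α, β; γ, -α]` fixes `(α + i) / γ`, which gives the centers below; the product of the three
-- half-turns has trace `1`, so by Cayley–Hamilton its cube is `-1`.
noncomputable def halfTurn₁ : SL(2, ℝ) := ⟨!![0, -1; 1, 0], by norm_num [det_fin_two_of]⟩
noncomputable def halfTurn₂ : SL(2, ℝ) := ⟨!![0, -2; 1 / 2, 0], by norm_num [det_fin_two_of]⟩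
noncomputable def halfTurn₃ : SL(2, ℝ) :=
  ⟨!![2 / 3, -13 / 3; 1 / 3, -2 / 3], by norm_num [det_fin_two_of]⟩

def center₁ : ℍ := UpperHalfPlane.I
def center₂ : ℍ := ⟨2 * Complex.I, by simp⟩
def center₃ : ℍ := ⟨2 + 3 * Complex.I, by simp⟩

theorem ncard_centers : ({center₁, center₂, center₃} : Set ℍ).ncard = 3 := by
  refine ncard_eq_three.2 ⟨_, _, _, ?_, ?_, ?_, rfl⟩ <;>
    simp [center₁, center₂, center₃, UpperHalfPlane.ext_iff, Complex.ext_iff]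

theorem isPointReflection_halfTurn₁ :
    IsPointReflection (IsometryEquiv.constSMul halfTurn₁) center₁ :=
  isPointReflection_constSMul_of_trace_eq_zero (by simp [halfTurn₁]) (by simp [halfTurn₁])
    (by simp [halfTurn₁, center₁])

theorem isPointReflection_halfTurn₂ :
    IsPointReflection (IsometryEquiv.constSMul halfTurn₂) center₂ :=
  isPointReflection_constSMul_of_trace_eq_zero (by simp [halfTurn₂]) (by simp [halfTurn₂])
    (by simp [halfTurn₂, center₂])

theorem isPointReflection_halfTurn₃ :
    IsPointReflection (IsometryEquiv.constSMul halfTurn₃) center₃ :=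
  isPointReflection_constSMul_of_trace_eq_zero (by norm_num [halfTurn₃]) (by simp [halfTurn₃])
    (by norm_num [halfTurn₃, center₃]; ring)

theorem halfTurn_mul_mul_pow_three : (halfTurn₁ * halfTurn₂ * halfTurn₃) ^ 3 = -1 := by
  refine Subtype.ext (?_ : (halfTurn₁.1 * halfTurn₂.1 * halfTurn₃.1) ^ 3 = -1)
  ext i j
  fin_cases i <;> fin_cases j <;>
    norm_num [halfTurn₁, halfTurn₂, halfTurn₃, pow_three, mul_fin_two]

theorem halfTurn_comp_comp_iterate_three :
    (IsometryEquiv.constSMul halfTurn₁ ∘ IsometryEquiv.constSMul halfTurn₂ ∘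
      IsometryEquiv.constSMul halfTurn₃ : ℍ → ℍ)^[3] = id := by
  have hcomp : (IsometryEquiv.constSMul halfTurn₁ ∘ IsometryEquiv.constSMul halfTurn₂ ∘
      IsometryEquiv.constSMul halfTurn₃ : ℍ → ℍ) = fun z ↦ (halfTurn₁ * halfTurn₂ * halfTurn₃) • z :=
    funext fun z ↦ by simp [mul_smul]
  rw [hcomp, smul_iterate, halfTurn_mul_mul_pow_three]
  exact funext UpperHalfPlane.neg_one_smul

/-- There is a three-element set `T ⊆ ℍ` such that for every partition of `ℍ` into
two pieces, one of the pieces contains an unbounded subset symmetric with respect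
to some point of `T`. -/
theorem exists_three_point_central_set_for_two_partitions :
    ∃ T : Set ℍ, T.ncard = 3 ∧
      ∀ A₁ A₂ : Set ℍ, A₁ ∪ A₂ = univ →
        ∃ A ∈ ({A₁, A₂} : Set (Set ℍ)), ∃ c ∈ T, ∃ f : ℍ ≃ᵢ ℍ,
          IsPointReflection f c ∧
          ∃ S ⊆ A, ¬ Bornology.IsBounded S ∧ f '' S = S := by
  refine ⟨{center₁, center₂, center₃}, ncard_centers, fun A₁ A₂ hU ↦ ?_⟩
  have of_not_swaps {c : ℍ} (hc : c ∈ ({center₁, center₂, center₃} : Set ℍ)) {f : ℍ ≃ᵢ ℍ}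
      (hf : IsPointReflection f c) (hA₁ : ¬EventuallySwaps (cobounded ℍ) A₁ f) :
      ∃ A ∈ ({A₁, A₂} : Set (Set ℍ)), ∃ c ∈ ({center₁, center₂, center₃} : Set ℍ),
        ∃ f : ℍ ≃ᵢ ℍ, IsPointReflection f c ∧ ∃ S ⊆ A, ¬IsBounded S ∧ f '' S = S :=
    let ⟨A, hA, hS⟩ := exists_unbounded_invariant_subset_of_not_eventuallySwaps hf.1 hU hA₁
    ⟨A, hA, c, hc, f, hf, hS⟩
  have htendsto (f : ℍ ≃ᵢ ℍ) : Tendsto f (cobounded ℍ) (cobounded ℍ) :=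
    f.isometry.antilipschitz.tendsto_cobounded
  have hnot := EventuallySwaps.not_and_and_of_iterate_three_eq_id (A := A₁) (htendsto _)
    (htendsto _) (htendsto _) halfTurn_comp_comp_iterate_three
  rw [not_and_or, not_and_or] at hnot
  rcases hnot with h | h | h
  · exact of_not_swaps (by simp) isPointReflection_halfTurn₁ h
  · exact of_not_swaps (by simp) isPointReflection_halfTurn₂ h
  · exact of_not_swaps (by simp) isPointReflection_halfTurn₃ h
end

section
/- For any two points c₁, c₂ in the hyperbolic plane ℍ there exists a partition ℍ = A₁ ∪ A₂ into two Borel sets such that neither A₁ nor A₂ contains an unbounded subset S with f_{c_i}(S) = S for i ∈ {1,2}, where f_{c_i} are the point reflections at c₁ and c₂. -/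
open UpperHalfPlane Set

/-!
Hyperbolic circles are Euclidean circles (`UpperHalfPlane.center`), and for a point `m` between
`x` and `y` the circles about `x` and `y` through `m` are externally tangent at `m`. Hence a
point between `x` and `y` is determined by its distances to them. An involutive isometry `f` with
the single fixed point `c` maps the midpoint of `x` and `f x` to a midpoint of the same pair, so
that midpoint is `c`, and this pins `f x` down to an explicit formula.

Moving `c₁, c₂` onto a vertical geodesic `re = a` by a Möbius transformation, split `ℍ` into the
half-plane `re > a` plus the ray `{re = a, im ≥ 1}`, and the complement. A point reflection at a
point `c` of that line exchanges the two open half-planes and acts on the line by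
`im ↦ c.im ^ 2 / im`, so a piece containing both `z` and its image forces `z` onto a compact
segment of the line.
-/

open Real
open scoped MatrixGroups

theorem smul_eq_of_dist_add_dist_eq {E : Type*} [NormedAddCommGroup E] [NormedSpace ℝ E]
    [StrictConvexSpace ℝ E] {a p b : E} (h : dist a p + dist p b = dist a b) :
    dist a b • p = dist p b • a + dist a p • b := by
  obtain ⟨t, ⟨ht₀, ht₁⟩, rfl⟩ := dist_add_dist_eq_iff.1 h
  rw [dist_left_lineMap, dist_lineMap_right, Real.norm_of_nonneg ht₀,
    Real.norm_of_nonneg (sub_nonneg.2 ht₁), AffineMap.lineMap_apply_module]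
  simp only [smul_add, smul_smul]
  module

namespace UpperHalfPlane

theorem dist_coe_center_center_of_dist_eq_add {x y : ℍ} {s t : ℝ} (hs : 0 ≤ s) (ht : 0 ≤ t)
    (h : dist x y = s + t) :
    dist (x.center s : ℂ) (y.center t) = x.im * sinh s + y.im * sinh t := by
  have hcosh := cosh_dist' x y
  rw [h, cosh_add] at hcosh
  have hx := x.im_pos
  have hy := y.im_pos
  rw [← sq_eq_sq₀ dist_nonneg (by positivity), Complex.dist_eq_re_im, sq_sqrt (by positivity)]
  simp only [coe_re, coe_im, center_re, center_im]
  field_simp at hcosh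
  linear_combination (-1 : ℝ) * hcosh + x.im ^ 2 * cosh_sq s + y.im ^ 2 * cosh_sq t

theorem exists_dist_eq_dist_eq_of_dist_eq_add {x y : ℍ} {s t : ℝ} (hs : 0 ≤ s) (ht : 0 ≤ t)
    (h : dist x y = s + t) : ∃ m, dist x m = s ∧ dist m y = t := by
  obtain ⟨p, hpx, hpy, -⟩ := (EuclideanGeometry.Sphere.isExtTangent_iff_dist_center
    (s₁ := (⟨x.center s, x.im * sinh s⟩ : EuclideanGeometry.Sphere ℂ))
    (s₂ := ⟨y.center t, y.im * sinh t⟩)).2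
    ⟨dist_coe_center_center_of_dist_eq_add hs ht h, by positivity, by positivity⟩
  obtain ⟨m, hm, rfl⟩ : p ∈ ((↑) : ℍ → ℂ) '' Metric.sphere x s := by
    rw [image_coe_sphere]; exact hpx
  refine ⟨m, by rwa [dist_comm], ?_⟩
  rw [dist_eq_iff_dist_coe_center_eq]
  exact hpy

theorem smul_coe_eq_of_dist_add_dist_eq {x m y : ℍ} (h : dist x m + dist m y = dist x y) :
    (x.im * sinh (dist x m) + y.im * sinh (dist m y)) • (m : ℂ) =
      (y.im * sinh (dist m y)) • (x.center (dist x m) : ℂ) +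
        (x.im * sinh (dist x m)) • (y.center (dist m y) : ℂ) := by
  have hA : dist (x.center (dist x m) : ℂ) m = x.im * sinh (dist x m) := by
    rw [dist_comm, ← dist_eq_iff_dist_coe_center_eq, dist_comm]
  have hB : dist (m : ℂ) (y.center (dist m y)) = y.im * sinh (dist m y) :=
    dist_eq_iff_dist_coe_center_eq.1 rfl
  have hAB := dist_coe_center_center_of_dist_eq_add dist_nonneg dist_nonneg h.symm
  have e := smul_eq_of_dist_add_dist_eq (a := (x.center (dist x m) : ℂ)) (p := m)
    (b := y.center (dist m y)) (by rw [hA, hB, hAB])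
  rwa [hA, hB, hAB] at e

theorem eq_of_dist_add_dist_eq {x m m' y : ℍ} (hxy : x ≠ y) (h : dist x m + dist m y = dist x y)
    (hx : dist x m' = dist x m) (hy : dist m' y = dist m y) : m' = m := by
  have h' : dist x m' + dist m' y = dist x y := by rw [hx, hy, h]
  have hpos : 0 < x.im * sinh (dist x m) + y.im * sinh (dist m y) := by
    rcases (dist_nonneg (x := x) (y := m)).eq_or_lt with hs0 | hs0
    · have := sinh_pos_iff.2 (show 0 < dist m y by linarith [dist_pos.2 hxy])
      positivity
    · have := sinh_pos_iff.2 hs0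
      positivity
  have e := smul_coe_eq_of_dist_add_dist_eq h'
  rw [hx, hy, ← smul_coe_eq_of_dist_add_dist_eq h] at e
  exact UpperHalfPlane.ext (smul_right_injective ℂ hpos.ne' e)

/-- The Möbius map `z ↦ c.re - c.im ^ 2 / (z - c.re)`, written in coordinates. -/
noncomputable def pointReflection (c z : ℍ) : ℍ :=
  ⟨⟨c.re - c.im ^ 2 * (z.re - c.re) / ((z.re - c.re) ^ 2 + z.im ^ 2),
    c.im ^ 2 * z.im / ((z.re - c.re) ^ 2 + z.im ^ 2)⟩, by dsimp; positivity⟩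

theorem pointReflection_re (c z : ℍ) :
    (pointReflection c z).re = c.re - c.im ^ 2 * (z.re - c.re) / ((z.re - c.re) ^ 2 + z.im ^ 2) :=
  rfl

theorem pointReflection_im (c z : ℍ) :
    (pointReflection c z).im = c.im ^ 2 * z.im / ((z.re - c.re) ^ 2 + z.im ^ 2) :=
  rfl

theorem pointReflection_self (c : ℍ) : pointReflection c c = c := by
  have := c.im_pos
  apply ext_re_im
  · simp [pointReflection_re]
  · simp [pointReflection_im]; field_simp

theorem eq_pointReflection_of_dist_eq {c x y : ℍ} (hy : dist c y = dist x c)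
    (hxy : dist x y = 2 * dist x c) : y = pointReflection c x := by
  rcases eq_or_ne x c with rfl | hxc
  · rw [dist_self, dist_eq_zero] at hy
    rw [← hy, pointReflection_self]
  -- `c` is a barycentre of the Euclidean centres of the tangent circles, which is linear in `y`
  have e := smul_coe_eq_of_dist_add_dist_eq (x := x) (m := c) (y := y) (by rw [hy, hxy]; ring)
  rw [hy] at e
  set r := dist x c
  have hsinh : 0 < sinh r := sinh_pos_iff.2 (dist_pos.2 hxc)
  have e_re := congrArg Complex.re e
  have e_im := congrArg Complex.im e
  simp only [Complex.add_re, Complex.add_im, Complex.real_smul, Complex.re_ofReal_mul,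
    Complex.im_ofReal_mul, coe_re, coe_im, center_re, center_im] at e_re e_im
  replace e_re : (x.im + y.im) * c.re = y.im * x.re + x.im * y.re := by
    apply mul_right_cancel₀ hsinh.ne'; linear_combination e_re
  replace e_im : (x.im + y.im) * c.im = 2 * x.im * y.im * cosh r := by
    apply mul_right_cancel₀ hsinh.ne'; linear_combination e_im
  have hcosh : cosh r = _ := cosh_dist' x c
  have hx := x.im_pos
  have hc := c.im_pos
  have hD : 0 < (x.re - c.re) ^ 2 + x.im ^ 2 := by positivity
  have him : y.im = c.im ^ 2 * x.im / ((x.re - c.re) ^ 2 + x.im ^ 2) := by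
    field_simp at hcosh
    rw [eq_div_iff hD.ne']
    linear_combination (-y.im) * hcosh - c.im * e_im
  apply ext_re_im
  · rw [pointReflection_re]
    have : c.im ^ 2 * (x.re - c.re) / ((x.re - c.re) ^ 2 + x.im ^ 2) =
        y.im * (x.re - c.re) / x.im := by
      rw [him]; field_simp
    rw [this]
    field_simp
    linear_combination -e_re
  · rw [pointReflection_im, him]

end UpperHalfPlane

theorem IsPointReflection.apply_eq_pointReflection {f : ℍ ≃ᵢ ℍ} {c : ℍ}
    (hf : IsPointReflection f c) (x : ℍ) : f x = pointReflection c x := by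
  rcases eq_or_ne x (f x) with hfx | hfx
  · rw [← hfx, (hf.2 x).1 hfx.symm, pointReflection_self]
  obtain ⟨m, hxm, hmy⟩ := exists_dist_eq_dist_eq_of_dist_eq_add (x := x) (y := f x)
    (s := dist x (f x) / 2) (t := dist x (f x) / 2) (by positivity) (by positivity) (by ring)
  have hfm : f m = m := by
    refine eq_of_dist_add_dist_eq hfx (by rw [hxm, hmy]; ring) ?_ ?_
    · calc dist x (f m) = dist (f (f x)) (f m) := by rw [hf.1]
        _ = dist x m := by rw [f.dist_eq, dist_comm, hmy, hxm]
    · rw [f.dist_eq, dist_comm, hxm, hmy]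
  obtain rfl : m = c := (hf.2 m).1 hfm
  exact eq_pointReflection_of_dist_eq (by rw [hmy, hxm]) (by rw [hxm]; ring)

theorem IsPointReflection.conj {f : ℍ ≃ᵢ ℍ} {c : ℍ} (hf : IsPointReflection f c) (g : ℍ ≃ᵢ ℍ) :
    IsPointReflection ((g.symm.trans f).trans g) (g c) := by
  refine ⟨fun x => by simp [hf.1], fun x => ?_⟩
  simp only [IsometryEquiv.trans_apply, ← g.eq_symm_apply, hf.2, g.symm_apply_eq]

def SymmetricSubsetsBounded (c : ℍ) (A : Set ℍ) : Prop :=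
  ∀ f : ℍ ≃ᵢ ℍ, IsPointReflection f c → ∀ S ⊆ A, f '' S = S → Bornology.IsBounded S

namespace SymmetricSubsetsBounded

theorem of_isBounded_inter_preimage {c : ℍ} {A : Set ℍ}
    (h : Bornology.IsBounded (A ∩ pointReflection c ⁻¹' A)) : SymmetricSubsetsBounded c A := by
  intro f hf S hS hfS
  refine h.subset fun z hz => ⟨hS hz, ?_⟩
  rw [mem_preimage, ← hf.apply_eq_pointReflection]
  exact hS (hfS ▸ mem_image_of_mem f hz)

theorem preimage {c : ℍ} {A : Set ℍ} (g : ℍ ≃ᵢ ℍ) (h : SymmetricSubsetsBounded (g c) A) :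
    SymmetricSubsetsBounded c (g ⁻¹' A) := by
  intro f hf S hS hfS
  have hgS : Bornology.IsBounded (g '' S) := by
    refine h _ (hf.conj g) _ (image_subset_iff.2 hS) ?_
    have hconj : ⇑((g.symm.trans f).trans g) = g ∘ f ∘ g.symm := rfl
    rw [hconj, image_comp, image_comp, g.image_symm, g.injective.preimage_image, hfS]
  simpa only [g.image_symm, g.injective.preimage_image] using
    g.symm.isometry.lipschitz.isBounded_image hgS

end SymmetricSubsetsBounded

namespace UpperHalfPlane

theorem re_eq_of_mul_pointReflection_re_nonneg {c z : ℍ}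
    (h : 0 ≤ (z.re - c.re) * ((pointReflection c z).re - c.re)) : z.re = c.re := by
  have hK : 0 < c.im ^ 2 / ((z.re - c.re) ^ 2 + z.im ^ 2) := by positivity
  have e : (pointReflection c z).re - c.re =
      -(c.im ^ 2 / ((z.re - c.re) ^ 2 + z.im ^ 2)) * (z.re - c.re) := by
    rw [pointReflection_re]; ring
  rw [e] at h
  have hsq : c.im ^ 2 / ((z.re - c.re) ^ 2 + z.im ^ 2) * (z.re - c.re) ^ 2 ≤ 0 := by linarith
  exact sub_eq_zero.1 (pow_eq_zero_iff two_ne_zero |>.1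
    (le_antisymm (nonpos_of_mul_nonpos_right hsq hK) (sq_nonneg _)))

theorem pointReflection_of_re_eq {c z : ℍ} (h : z.re = c.re) :
    (pointReflection c z).re = c.re ∧ (pointReflection c z).im = c.im ^ 2 / z.im := by
  have := z.im_pos
  rw [pointReflection_re, pointReflection_im, h]
  constructor
  · simp
  · rw [sub_self, zero_pow two_ne_zero, zero_add]
    field_simp

theorem isBounded_setOf_re_eq_im_mem_Icc (a : ℝ) {p q : ℝ} (hp : 0 < p) :
    Bornology.IsBounded {z : ℍ | z.re = a ∧ z.im ∈ Icc p q} := by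
  refine ((isCompact_Icc (a := log p) (b := log q)).image
    (isometry_vertical_line a).continuous).isBounded.subset ?_
  rintro z ⟨hre, hpz, hzq⟩
  refine ⟨log z.im, ⟨log_le_log hp hpz, log_le_log z.im_pos hzq⟩, ?_⟩
  apply ext_re_im
  · simp [hre]
  · simp [exp_log z.im_pos]

def halfPlaneWithRay (a : ℝ) : Set ℍ :=
  {z | a < z.re ∨ z.re = a ∧ 1 ≤ z.im}

theorem measurableSet_halfPlaneWithRay (a : ℝ) : MeasurableSet (halfPlaneWithRay a) := by
  have hre : Measurable re := continuous_re.measurable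
  have him : Measurable im := continuous_im.measurable
  exact (measurableSet_lt measurable_const hre).union
    ((measurableSet_eq_fun hre measurable_const).inter (measurableSet_le measurable_const him))

theorem isBounded_halfPlaneWithRay_inter_preimage {c : ℍ} :
    Bornology.IsBounded
      (halfPlaneWithRay c.re ∩ pointReflection c ⁻¹' halfPlaneWithRay c.re) := by
  refine (isBounded_setOf_re_eq_im_mem_Icc c.re one_pos (q := c.im ^ 2)).subset ?_
  rintro z ⟨hz, hρz⟩
  have hre : z.re = c.re := by
    refine re_eq_of_mul_pointReflection_re_nonneg (mul_nonneg ?_ ?_)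
    · rcases hz with h | h
      exacts [sub_nonneg.2 h.le, sub_nonneg.2 h.1.ge]
    · rcases hρz with h | h
      exacts [sub_nonneg.2 h.le, sub_nonneg.2 h.1.ge]
  obtain ⟨hρre, hρim⟩ := pointReflection_of_re_eq hre
  have hz1 : 1 ≤ z.im := hz.resolve_left (by rw [hre]; exact lt_irrefl _) |>.2
  have hρz1 : 1 ≤ c.im ^ 2 / z.im := hρim ▸ (hρz.resolve_left (by rw [hρre]; exact lt_irrefl _)).2
  exact ⟨hre, hz1, by rwa [le_div_iff₀ z.im_pos, one_mul] at hρz1⟩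

theorem isBounded_compl_halfPlaneWithRay_inter_preimage {c : ℍ} :
    Bornology.IsBounded
      ((halfPlaneWithRay c.re)ᶜ ∩ pointReflection c ⁻¹' (halfPlaneWithRay c.re)ᶜ) := by
  refine (isBounded_setOf_re_eq_im_mem_Icc c.re (pow_pos c.im_pos 2) (q := 1)).subset ?_
  rintro z ⟨hz, hρz⟩
  simp only [halfPlaneWithRay, mem_preimage, mem_compl_iff, mem_ofPred_eq, not_or, not_and,
    not_le, not_lt] at hz hρz
  have hre : z.re = c.re :=
    re_eq_of_mul_pointReflection_re_nonneg (mul_nonneg_of_nonpos_of_nonpos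
      (sub_nonpos.2 hz.1) (sub_nonpos.2 hρz.1))
  obtain ⟨hρre, hρim⟩ := pointReflection_of_re_eq hre
  have hρz1 := hρz.2 hρre
  rw [hρim, div_lt_one z.im_pos] at hρz1
  exact ⟨hre, hρz1.le, (hz.2 hre).le⟩

/-- The Möbius map `z ↦ -1 / (z - a)`: it sends `a` to `∞`, hence geodesics ending at `a` to
vertical lines. -/
noncomputable def sendToInfty (a : ℝ) : SL(2, ℝ) := ⟨!![0, -1; 1, -a], by simp⟩

theorem re_sendToInfty_smul (a : ℝ) (z : ℍ) :
    (sendToInfty a • z).re = -(z.re - a) / ((z.re - a) ^ 2 + z.im ^ 2) := by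
  rw [← coe_re, coe_specialLinearGroup_apply]
  simp [sendToInfty, Complex.div_re, Complex.normSq_apply]
  ring

theorem re_sendToInfty_smul_of_mem_circle {m r : ℝ} (hr : 0 < r) {z : ℍ}
    (hz : (z.re - m) ^ 2 + z.im ^ 2 = r ^ 2) : (sendToInfty (m - r) • z).re = -1 / (2 * r) := by
  have hD : (z.re - (m - r)) ^ 2 + z.im ^ 2 = 2 * r * (z.re - (m - r)) := by
    linear_combination hz
  have hu : z.re - (m - r) ≠ 0 := by
    intro hu
    rw [hu] at hD
    have := z.im_pos
    nlinarith
  rw [re_sendToInfty_smul, hD]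
  field_simp

theorem exists_SL2_re_smul_eq (c₁ c₂ : ℍ) : ∃ g : SL(2, ℝ), (g • c₁).re = (g • c₂).re := by
  rcases eq_or_ne c₁.re c₂.re with h | h
  · exact ⟨1, by simpa⟩
  -- `c₁, c₂` lie on the geodesic semicircle with centre `m` and radius `r`
  set m := (c₁.re ^ 2 + c₁.im ^ 2 - c₂.re ^ 2 - c₂.im ^ 2) / (2 * (c₁.re - c₂.re))
  set r := √((c₁.re - m) ^ 2 + c₁.im ^ 2)
  have hr : 0 < r := sqrt_pos.2 (by positivity)
  have h₁ : (c₁.re - m) ^ 2 + c₁.im ^ 2 = r ^ 2 := (sq_sqrt (by positivity)).symm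
  have h₂ : (c₂.re - m) ^ 2 + c₂.im ^ 2 = r ^ 2 := by
    have hm : m * (2 * (c₁.re - c₂.re)) = c₁.re ^ 2 + c₁.im ^ 2 - c₂.re ^ 2 - c₂.im ^ 2 :=
      div_mul_cancel₀ _ (mul_ne_zero two_ne_zero (sub_ne_zero.2 h))
    rw [← h₁]
    linear_combination hm
  exact ⟨sendToInfty (m - r), by
    rw [re_sendToInfty_smul_of_mem_circle hr h₁, re_sendToInfty_smul_of_mem_circle hr h₂]⟩

end UpperHalfPlane

/-- For any two points `c₁, c₂` of the hyperbolic plane there is a Borel partition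
`ℍ = A₁ ∪ A₂` such that neither piece contains an unbounded subset symmetric with
respect to `c₁` or `c₂`. -/
theorem exists_borel_two_partition_avoiding_two_centers (c₁ c₂ : ℍ) :
    ∃ A₁ A₂ : Set ℍ, @MeasurableSet ℍ (borel ℍ) A₁ ∧ @MeasurableSet ℍ (borel ℍ) A₂ ∧
      A₁ ∪ A₂ = univ ∧ A₁ ∩ A₂ = ∅ ∧
      ∀ (f : ℍ ≃ᵢ ℍ) (c : ℍ), (c = c₁ ∨ c = c₂) → IsPointReflection f c →
        ∀ S : Set ℍ, (S ⊆ A₁ ∨ S ⊆ A₂) → f '' S = S → Bornology.IsBounded S := by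
  obtain ⟨g, hg⟩ := exists_SL2_re_smul_eq c₁ c₂
  let G : ℍ ≃ᵢ ℍ := IsometryEquiv.constSMul g
  set A := G ⁻¹' halfPlaneWithRay (G c₁).re
  have hA : MeasurableSet A := G.continuous.measurable (measurableSet_halfPlaneWithRay _)
  rw [← BorelSpace.measurable_eq (α := ℍ)]
  refine ⟨A, Aᶜ, hA, hA.compl, union_compl_self A, inter_compl_self A, ?_⟩
  rintro f c hc hf S hS hfS
  have hGc : (G c).re = (G c₁).re := by
    rcases hc with rfl | rfl
    exacts [rfl, hg.symm]
  rcases hS with hS | hS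
  · refine SymmetricSubsetsBounded.preimage G ?_ f hf S hS hfS
    rw [← hGc]
    exact .of_isBounded_inter_preimage isBounded_halfPlaneWithRay_inter_preimage
  · refine SymmetricSubsetsBounded.preimage (A := (halfPlaneWithRay _)ᶜ) G ?_ f hf S hS hfS
    rw [← hGc]
    exact .of_isBounded_inter_preimage isBounded_compl_halfPlaneWithRay_inter_preimage
end

section
/- There exists a partition of the Euclidean plane ℝ² into three Borel sets B₀, B₁, B₂ such that no B_i contains an unbounded subset S satisfying S = {2c − x : x ∈ S} for some point c ∈ ℝ². -/
/-!
Take unit vectors `u₀, u₁, u₂` at mutual angles `2π/3` and let `Bₖ` be the sector where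
`⟪uₖ, x⟫` is largest (ties broken by index); there `‖x‖ ≤ 2⟪uₖ, x⟫`. If `S ⊆ Bₖ` is symmetric
about `c`, then for `x ∈ S` linearity gives
`‖x‖ ≤ 2⟪uₖ, x⟫ = 4⟪uₖ, c⟫ - 2⟪uₖ, 2c - x⟫ ≤ 4⟪uₖ, c⟫ - ‖2c - x‖`, so `S` is bounded.
-/

open Set

open Bornology in
theorem Bornology.IsBounded.of_mapsTo_reflection_of_norm_le
    {E F : Type*} [SeminormedAddCommGroup E] [FunLike F E ℝ] [AddMonoidHomClass F E ℝ]
    {φ : F} {S : Set E} (hφ : ∀ x ∈ S, ‖x‖ ≤ φ x) (c : E)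
    (hS : MapsTo (fun x => 2 • c - x) S S) : IsBounded S := by
  refine Metric.isBounded_closedBall (x := 0) (r := 2 * φ c) |>.subset fun x hx => ?_
  have hrefl := hφ _ (hS hx)
  rw [map_sub, map_nsmul, nsmul_eq_mul, Nat.cast_ofNat] at hrefl
  rw [Metric.mem_closedBall, dist_zero_right]
  linarith [hφ x hx, norm_nonneg (2 • c - x)]

section NormDominated

variable {ι E : Type*} [LinearOrder ι] [LocallyFiniteOrderBot ι]
  [SeminormedAddCommGroup E] [NormedSpace ℝ E]

def normDominatedPieces (φ : ι → StrongDual ℝ E) : ι → Set E :=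
  disjointed fun i => {x | ‖x‖ ≤ φ i x}

theorem measurableSet_normDominatedPieces [MeasurableSpace E] [OpensMeasurableSpace E]
    (φ : ι → StrongDual ℝ E) (i : ι) : MeasurableSet (normDominatedPieces φ i) := by
  have hdominated (j : ι) : MeasurableSet {x : E | ‖x‖ ≤ φ j x} :=
    measurableSet_le continuous_norm.measurable (φ j).measurable
  exact disjointedRec (fun _ j ht => ht.diff (hdominated j)) (hdominated i)

theorem iUnion_normDominatedPieces {φ : ι → StrongDual ℝ E} (hφ : ∀ x, ∃ i, ‖x‖ ≤ φ i x) :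
    ⋃ i, normDominatedPieces φ i = univ := by
  rw [normDominatedPieces, iUnion_disjointed, iUnion_eq_univ_iff]
  exact hφ

theorem pairwise_disjoint_normDominatedPieces (φ : ι → StrongDual ℝ E) :
    Pairwise (Function.onFun Disjoint (normDominatedPieces φ)) :=
  disjoint_disjointed _

theorem Bornology.IsBounded.of_subset_normDominatedPieces {φ : ι → StrongDual ℝ E} {i : ι}
    {S : Set E} (hS : S ⊆ normDominatedPieces φ i) (c : E)
    (hc : MapsTo (fun x => 2 • c - x) S S) : Bornology.IsBounded S :=
  .of_mapsTo_reflection_of_norm_le (φ := φ i)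
    (fun _ hx => disjointed_subset (fun j => {x | ‖x‖ ≤ φ j x}) i (hS hx)) c hc

end NormDominated

theorem sum_sq_le_six_mul_sq_of_sum_eq_zero {a : Fin 3 → ℝ} (hsum : ∑ j, a j = 0) {i : Fin 3}
    (hi : ∀ j, a j ≤ a i) : ∑ j, a j ^ 2 ≤ 6 * a i ^ 2 := by
  have h0 := sub_nonneg.2 (hi 0)
  have h1 := sub_nonneg.2 (hi 1)
  have h2 := sub_nonneg.2 (hi 2)
  simp only [Fin.sum_univ_three] at hsum ⊢
  fin_cases i <;>
    nlinarith [mul_nonneg h0 h1, mul_nonneg h1 h2, mul_nonneg h0 h2]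

open EuclideanSpace in
/-- `2⟪uₖ, ·⟫` for `uₖ = (cos (2πk/3), sin (2πk/3))`. -/
noncomputable def trisectorFunctional : Fin 3 → StrongDual ℝ (EuclideanSpace ℝ (Fin 2)) :=
  ![2 • proj 0, -proj 0 + √3 • proj 1, -proj 0 - √3 • proj 1]

theorem exists_norm_le_trisectorFunctional (x : EuclideanSpace ℝ (Fin 2)) :
    ∃ i, ‖x‖ ≤ trisectorFunctional i x := by
  obtain ⟨i, hi⟩ := Finite.exists_max fun i => trisectorFunctional i x
  refine ⟨i, ?_⟩
  have hsum : ∑ j, trisectorFunctional j x = 0 := by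
    simp only [trisectorFunctional, Fin.sum_univ_three, Matrix.cons_val_zero, smul_apply,
      PiLp.proj_apply, nsmul_eq_mul, Nat.cast_ofNat, Matrix.cons_val_one, add_apply, neg_apply,
      smul_eq_mul, Matrix.cons_val, sub_apply]
    ring
  have hsq : ∑ j, trisectorFunctional j x ^ 2 = 6 * ‖x‖ ^ 2 := by
    have h3 : √3 ^ 2 = 3 := Real.sq_sqrt (by norm_num)
    simp only [trisectorFunctional, Fin.sum_univ_three, Matrix.cons_val_zero, smul_apply,
      PiLp.proj_apply, nsmul_eq_mul, Nat.cast_ofNat, Matrix.cons_val_one, add_apply, neg_apply,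
      smul_eq_mul, Matrix.cons_val, sub_apply,
      EuclideanSpace.real_norm_sq_eq, Fin.sum_univ_two]
    linear_combination (x 1) ^ 2 * h3 * 2
  have hnonneg : 0 ≤ trisectorFunctional i x := by
    rw [Fin.sum_univ_three] at hsum
    linarith [hi 0, hi 1, hi 2]
  refine (pow_le_pow_iff_left₀ (norm_nonneg x) hnonneg two_ne_zero).1 ?_
  linarith [sum_sq_le_six_mul_sq_of_sum_eq_zero hsum hi]

/-- There is a partition of the Euclidean plane into three Borel sets none of which
contains an unbounded centrally symmetric subset. -/
theorem exists_borel_three_partition_of_plane_without_symmetric_unbounded :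
    ∃ B : Fin 3 → Set (EuclideanSpace ℝ (Fin 2)),
      (∀ i, MeasurableSet (B i)) ∧
      (⋃ i, B i) = univ ∧
      Pairwise (Function.onFun Disjoint B) ∧
      ∀ (i : Fin 3) (c : EuclideanSpace ℝ (Fin 2)) (S : Set (EuclideanSpace ℝ (Fin 2))),
        S ⊆ B i → (fun x => 2 • c - x) '' S = S → Bornology.IsBounded S :=
  ⟨normDominatedPieces trisectorFunctional, measurableSet_normDominatedPieces _,
    iUnion_normDominatedPieces exists_norm_le_trisectorFunctional,
    pairwise_disjoint_normDominatedPieces _,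
    fun _ c _ hS hsymm =>
      .of_subset_normDominatedPieces hS c (mapsTo_iff_image_subset.2 hsymm.subset)⟩
end

section
/- For every partition ℝ² = A₁ ∪ A₂ of the Euclidean plane into two sets, one of the sets A_i contains a subset S that is unbounded and centrally symmetric with respect to some point c ∈ ℝ², i.e., S = {2c − x : x ∈ S}. -/
/-!
Suppose neither piece contains an unbounded set symmetric about a point, so that for every piece
`A` and centre `c` the symmetric part `A ∩ (2c - A)` is bounded. For `x ∈ A` far out, `-x ∉ A`,
so `-x` lies in the other piece `B`; then `x ± 2v ∈ A`, for otherwise `-x` and `x ± 2v` would be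
far points of `B` symmetric about `±v`. Thus off a bounded set both pieces are invariant under
translation by `±2v`, and a progression `p + ℤ • 2v` avoiding that bounded set (one exists on a
line parallel to `v` when the dimension is at least two) lies entirely in the piece of `p`: it is
unbounded and symmetric about `p`.
-/

open Set Bornology Pointwise

variable {E : Type*}

def HasUnboundedSymmetricSubset [AddCommGroup E] [Bornology E] (A : Set E) : Prop :=
  ∃ c S, S ⊆ A ∧ ¬ IsBounded S ∧ (fun x => 2 • c - x) '' S = S

theorem image_reflect_inter_preimage [AddCommGroup E] (A : Set E) (c : E) :
    (fun x => 2 • c - x) '' (A ∩ (fun x => 2 • c - x) ⁻¹' A) =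
      A ∩ (fun x => 2 • c - x) ⁻¹' A := by
  have hinv : Function.Involutive (fun x : E => 2 • c - x) := fun x => sub_sub_cancel _ _
  rw [hinv.image_eq_preimage_symm, preimage_inter, ← preimage_comp, hinv.comp_self,
    preimage_id, inter_comm]

theorem isBounded_inter_preimage_reflect [AddCommGroup E] [Bornology E] {A : Set E}
    (hA : ¬ HasUnboundedSymmetricSubset A) (c : E) :
    IsBounded (A ∩ (fun x => 2 • c - x) ⁻¹' A) := by
  by_contra h
  exact hA ⟨c, _, inter_subset_left, h, image_reflect_inter_preimage A c⟩

theorem add_zsmul_mem_of_forall_add_sub_mem [AddCommGroup E] {A K : Set E} {w p : E}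
    (hstep : ∀ x ∈ A, x ∉ K → x + w ∈ A ∧ x - w ∈ A) (hp : p ∈ A)
    (hpK : ∀ n : ℤ, p + n • w ∉ K) (n : ℤ) : p + n • w ∈ A := by
  induction n using Int.induction_on with
  | zero => simpa using hp
  | succ n ih =>
    convert (hstep _ ih (hpK n)).1 using 1
    module
  | pred n ih =>
    convert (hstep _ ih (hpK _)).2 using 1
    module

theorem image_reflect_range_add_zsmul [AddCommGroup E] (p w : E) :
    (fun x => 2 • p - x) '' range (fun n : ℤ => p + n • w) =
      range (fun n : ℤ => p + n • w) := by
  rw [← range_comp, ← neg_surjective.range_comp (fun n : ℤ => p + n • w)]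
  congr 1
  ext n
  simp only [Function.comp_apply, neg_zsmul, two_nsmul]
  abel

theorem exists_isBounded_forall_add_two_nsmul_mem [SeminormedAddCommGroup E] {A B : Set E}
    (hAB : A ∪ B = univ) (hA : ¬ HasUnboundedSymmetricSubset A)
    (hB : ¬ HasUnboundedSymmetricSubset B) (v : E) :
    ∃ K, IsBounded K ∧ ∀ x ∈ A, x ∉ K → x + 2 • v ∈ A := by
  refine ⟨A ∩ (fun x => 2 • (0 : E) - x) ⁻¹' A ∪ -(B ∩ (fun x => 2 • v - x) ⁻¹' B),
    (isBounded_inter_preimage_reflect hA 0).union (isBounded_inter_preimage_reflect hB v).neg,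
    fun x hx hxK => ?_⟩
  have hcover : ∀ y, y ∈ A ∨ y ∈ B := fun y => by simpa [← hAB] using mem_univ y
  simp only [mem_union, mem_neg, mem_inter_iff, mem_preimage, not_or, smul_zero, zero_sub,
    sub_neg_eq_add, add_comm (2 • v)] at hxK
  have hnegx : -x ∈ B := (hcover (-x)).resolve_left fun h => hxK.1 ⟨hx, h⟩
  exact (hcover _).resolve_right fun h => hxK.2 ⟨hnegx, h⟩

theorem exists_isBounded_forall_add_sub_two_nsmul_mem [SeminormedAddCommGroup E] {A B : Set E}
    (hAB : A ∪ B = univ) (hA : ¬ HasUnboundedSymmetricSubset A)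
    (hB : ¬ HasUnboundedSymmetricSubset B) (v : E) :
    ∃ K, IsBounded K ∧ ∀ x ∈ A, x ∉ K → x + 2 • v ∈ A ∧ x - 2 • v ∈ A := by
  obtain ⟨K₁, hK₁, h₁⟩ := exists_isBounded_forall_add_two_nsmul_mem hAB hA hB v
  obtain ⟨K₂, hK₂, h₂⟩ := exists_isBounded_forall_add_two_nsmul_mem hAB hA hB (-v)
  refine ⟨K₁ ∪ K₂, hK₁.union hK₂, fun x hx hxK => ?_⟩
  rw [mem_union, not_or] at hxK
  refine ⟨h₁ x hx hxK.1, ?_⟩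
  simpa only [smul_neg, ← sub_eq_add_neg] using h₂ x hx hxK.2

theorem not_isBounded_range_add_zsmul [NormedAddCommGroup E] [NormedSpace ℝ E] (p : E) {w : E}
    (hw : w ≠ 0) : ¬ IsBounded (range fun n : ℤ => p + n • w) := by
  intro hb
  obtain ⟨R, hR⟩ := hb.exists_norm_le
  obtain ⟨n, hn⟩ := exists_nat_gt ((R + ‖p‖) / ‖w‖)
  have hfar : R + ‖p‖ < ‖n • w‖ := by
    rwa [RCLike.norm_nsmul ℝ, nsmul_eq_mul, ← div_lt_iff₀ (norm_pos_iff.2 hw)]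
  have hnear : ‖n • w‖ ≤ R + ‖p‖ := calc
    ‖n • w‖ = ‖(p + (n : ℤ) • w) - p‖ := by rw [natCast_zsmul, add_sub_cancel_left]
    _ ≤ ‖p + (n : ℤ) • w‖ + ‖p‖ := norm_sub_le _ _
    _ ≤ R + ‖p‖ := by gcongr; exact hR _ ⟨n, rfl⟩
  linarith

theorem exists_forall_add_zsmul_notMem [SeminormedAddCommGroup E] [NormedSpace ℝ E]
    (φ : E →L[ℝ] ℝ) (hφ : Function.Surjective φ) {w : E} (hw : φ w = 0) {K : Set E}
    (hK : IsBounded K) : ∃ p, ∀ n : ℤ, p + n • w ∉ K := by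
  obtain ⟨M, hM⟩ := (φ.lipschitz.isBounded_image hK).bddAbove
  obtain ⟨p, hp⟩ := hφ (M + 1)
  refine ⟨p, fun n hn => ?_⟩
  have := hM ⟨_, hn, rfl⟩
  simp only [map_add, map_zsmul, hp, hw, smul_zero, add_zero] at this
  linarith

theorem hasUnboundedSymmetricSubset_of_forall_add_sub_mem [NormedAddCommGroup E]
    [NormedSpace ℝ E] {A K : Set E} {w p : E} (hw : w ≠ 0)
    (hstep : ∀ x ∈ A, x ∉ K → x + w ∈ A ∧ x - w ∈ A) (hp : p ∈ A)
    (hpK : ∀ n : ℤ, p + n • w ∉ K) : HasUnboundedSymmetricSubset A :=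
  ⟨p, _, range_subset_iff.2 (add_zsmul_mem_of_forall_add_sub_mem hstep hp hpK),
    not_isBounded_range_add_zsmul p hw, image_reflect_range_add_zsmul p w⟩

theorem hasUnboundedSymmetricSubset_or_of_union_eq_univ [NormedAddCommGroup E]
    [NormedSpace ℝ E] {A B : Set E} (hAB : A ∪ B = univ) (φ : E →L[ℝ] ℝ)
    (hφ : Function.Surjective φ) {w : E} (hw₀ : w ≠ 0) (hw : φ w = 0) :
    HasUnboundedSymmetricSubset A ∨ HasUnboundedSymmetricSubset B := by
  by_contra! h
  obtain ⟨K_A, hK_A, hA⟩ := exists_isBounded_forall_add_sub_two_nsmul_mem hAB h.1 h.2 w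
  obtain ⟨K_B, hK_B, hB⟩ :=
    exists_isBounded_forall_add_sub_two_nsmul_mem (union_comm A B ▸ hAB) h.2 h.1 w
  have h2w₀ : 2 • w ≠ 0 := by
    rwa [two_nsmul, ← two_smul ℝ, smul_ne_zero_iff_right two_ne_zero]
  obtain ⟨p, hp⟩ := exists_forall_add_zsmul_notMem φ hφ (w := 2 • w)
    (by rw [map_nsmul, hw, smul_zero]) (hK_A.union hK_B)
  rcases (by simpa [← hAB] using mem_univ p : p ∈ A ∨ p ∈ B) with hpA | hpB
  · exact h.1 (hasUnboundedSymmetricSubset_of_forall_add_sub_mem h2w₀ hA hpA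
      fun n hn => hp n (Or.inl hn))
  · exact h.2 (hasUnboundedSymmetricSubset_of_forall_add_sub_mem h2w₀ hB hpB
      fun n hn => hp n (Or.inr hn))

/-- For every partition of the Euclidean plane into two pieces, one of the pieces
contains an unbounded centrally symmetric subset. -/
theorem two_partition_of_plane_has_unbounded_symmetric_subset
    (A₁ A₂ : Set (EuclideanSpace ℝ (Fin 2))) (hcover : A₁ ∪ A₂ = univ) :
    ∃ A ∈ ({A₁, A₂} : Set (Set (EuclideanSpace ℝ (Fin 2)))),
      ∃ (c : EuclideanSpace ℝ (Fin 2)) (S : Set (EuclideanSpace ℝ (Fin 2))),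
        S ⊆ A ∧ ¬ Bornology.IsBounded S ∧ (fun x => 2 • c - x) '' S = S := by
  have hsurj : Function.Surjective (EuclideanSpace.proj (𝕜 := ℝ) (1 : Fin 2)) :=
    fun t => ⟨EuclideanSpace.single 1 t, by simp⟩
  rcases hasUnboundedSymmetricSubset_or_of_union_eq_univ hcover _ hsurj
    (w := EuclideanSpace.single 0 1) (by simp) (by simp) with h | h
  · exact ⟨A₁, by simp, h⟩
  · exact ⟨A₂, by simp, h⟩
end
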